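/- For every pair of nodes u, v in graphs G_a, G_b (possibly distinct) and every k ≥ 1: if the depth-k computation trees of u and v are equal, then the WL colors of u and v after k−1 iterations of the 1-WL color refinement are equal. -/

import Mathlib

open scoped BigOperators


noncomputable section

/-- Unnormalized optimal transport between equal-cardinality multisets (represented
as lists): the minimum over bijective matchings of the summed ground costs. -/
noncomputable def listOT {α : Type*} (d : α → α → ℝ) (X Y : List α) : ℝ :=
  sInf {c : ℝ | ∃ Y' : List α, Y.Perm Y' ∧ c = (List.zipWith d X Y').sum}

/-- Blank augmentation `ρ`: pad the smaller multiset with copies of the blank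
element `b` so that both multisets have equal cardinality. -/
def pad {α : Type*} (b : α) (X Y : List α) : List α × List α :=
  (X ++ List.replicate (Y.length - X.length) b,
   Y ++ List.replicate (X.length - Y.length) b)

/-- Blank-augmented unnormalized optimal transport `OT_d(ρ(X, Y))`. -/
noncomputable def otPad {α : Type*} (d : α → α → ℝ) (b : α) (X Y : List α) : ℝ :=
  listOT d (pad b X Y).1 (pad b X Y).2

/-- Rooted trees with node features in `ℝ^p`; children are recorded as a list
(representing the multiset of child subtrees). -/
inductive RTree (p : ℕ) : Type
  | node : EuclideanSpace ℝ (Fin p) → List (RTree p) → RTree p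

namespace RTree

variable {p : ℕ}

/-- The blank tree: a single node with zero feature vector and no children. -/
def blank : RTree p := node 0 []

mutual
  /-- Depth of a rooted tree (a single node has depth 1). -/
  def depth : RTree p → ℕ
    | node _ cs => 1 + depthList cs
  /-- Maximal depth of a list of trees. -/
  def depthList : List (RTree p) → ℕ
    | [] => 0
    | t :: ts => max (depth t) (depthList ts)
end

/-- Tree distance with recursion fuel: `tdAux w n` computes the hierarchical-OT
tree distance `TD_w` correctly whenever `n` is at least the maximal depth. -/
noncomputable def tdAux (w : ℕ → ℝ) : ℕ → RTree p → RTree p → ℝ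
  | 0, _, _ => 0
  | n + 1, node x cs, node y ds =>
      ‖x - y‖ +
        (if 1 < max (node x cs).depth (node y ds).depth then
          w (max (node x cs).depth (node y ds).depth) * otPad (tdAux w n) blank cs ds
        else 0)

/-- The tree distance `TD_w`: distance of root features, plus `w(L)` times the
blank-augmented unnormalized OT between the multisets of child subtrees (with
`TD_w` as the recursive ground cost), `L` being the maximum depth. -/
noncomputable def TD (w : ℕ → ℝ) (Ta Tb : RTree p) : ℝ :=
  tdAux w (max Ta.depth Tb.depth) Ta Tb

/-- Number of nodes at a level of the tree (level `0` is the root, so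
`Width_l(T) = widthAt T (l-1)` in 1-indexed level notation). -/
def widthAt : RTree p → ℕ → ℕ
  | _, 0 => 1
  | node _ cs, l + 1 => (cs.map (fun c => widthAt c l)).sum
termination_by t l => l

/-- Every node feature in the tree is nonzero. -/
inductive NoZero : RTree p → Prop
  | node {x : EuclideanSpace ℝ (Fin p)} {cs : List (RTree p)} :
      x ≠ 0 → (∀ t ∈ cs, NoZero t) → NoZero (RTree.node x cs)

/-- Equivalence of rooted labelled trees up to reordering of children (fuel
version). -/
def equivAux : ℕ → RTree p → RTree p → Prop
  | 0, _, _ => True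
  | n + 1, node x cs, node y ds =>
      x = y ∧ ∃ ds' : List (RTree p), ds.Perm ds' ∧ List.Forall₂ (equivAux n) cs ds'

/-- Two rooted labelled trees are isomorphic: equal roots and children match up
to a bijection level by level. -/
def Equiv' (Ta Tb : RTree p) : Prop := equivAux (max Ta.depth Tb.depth) Ta Tb

end RTree

/-- Depth-`(k+1)` computation tree of node `v`: `compTree G x 0 v` is the single
node `v` with its feature, and the level-`(k+1)` tree attaches the depth-`k`
computation trees of the neighbors of `v`. -/
noncomputable def compTree {V : Type*} [Fintype V] {p : ℕ} (G : SimpleGraph V)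
    [DecidableRel G.Adj] (x : V → EuclideanSpace ℝ (Fin p)) : ℕ → V → RTree p
  | 0, v => RTree.node (x v) []
  | k + 1, v => RTree.node (x v) (((G.neighborFinset v).val.toList).map (compTree G x k))

/-- Tree Mover's Distance `TMD_w^L`: blank-augmented unnormalized OT between the
multisets of depth-`L` computation trees of the two attributed graphs, with the
hierarchical tree distance `TD_w` as ground cost. -/
noncomputable def TMD {Va Vb : Type*} [Fintype Va] [Fintype Vb] {p : ℕ}
    (w : ℕ → ℝ) (L : ℕ)
    (Ga : SimpleGraph Va) [DecidableRel Ga.Adj] (xa : Va → EuclideanSpace ℝ (Fin p))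
    (Gb : SimpleGraph Vb) [DecidableRel Gb.Adj] (xb : Vb → EuclideanSpace ℝ (Fin p)) : ℝ :=
  otPad (RTree.TD w) RTree.blank
    ((Finset.univ.val.toList).map (compTree Ga xa (L - 1)))
    ((Finset.univ.val.toList).map (compTree Gb xb (L - 1)))


noncomputable section

/-- Canonical WL color space: `WLColor p k` is the type of colors after `k`
rounds of refinement (an injective hash is modelled by the identity on this
canonical color space). -/
def WLColor (p : ℕ) : ℕ → Type :=
  fun k => Nat.rec (EuclideanSpace ℝ (Fin p)) (fun _ C => C × Multiset C) k

/-- 1-WL color refinement: `wl G x 0 v = x v` and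
`wl G x (k+1) v = (wl G x k v, {{wl G x k u : u ∈ N(v)}})`. -/
noncomputable def wl {V : Type*} [Fintype V] {p : ℕ} (G : SimpleGraph V)
    [DecidableRel G.Adj] (x : V → EuclideanSpace ℝ (Fin p)) :
    (k : ℕ) → V → WLColor p k
  | 0, v => x v
  | k + 1, v => (wl G x k v, (G.neighborFinset v).val.map (wl G x k))

/-- GIN node embeddings. -/
noncomputable def ginEmb {V : Type*} [Fintype V] {d : ℕ} (G : SimpleGraph V)
    [DecidableRel G.Adj] (x : V → EuclideanSpace ℝ (Fin d))
    (φ : ℕ → EuclideanSpace ℝ (Fin d) → EuclideanSpace ℝ (Fin d)) (ε : ℝ) :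
    ℕ → V → EuclideanSpace ℝ (Fin d)
  | 0, v => x v
  | l + 1, v =>
      φ (l + 1) (ginEmb G x φ ε l v + ε • ∑ u ∈ G.neighborFinset v, ginEmb G x φ ε l u)

/-- GIN graph-level output with readout `ψ`. -/
noncomputable def gin {V : Type*} [Fintype V] {d : ℕ} (G : SimpleGraph V)
    [DecidableRel G.Adj] (x : V → EuclideanSpace ℝ (Fin d))
    (φ : ℕ → EuclideanSpace ℝ (Fin d) → EuclideanSpace ℝ (Fin d)) (ε : ℝ)
    (ψ : EuclideanSpace ℝ (Fin d) → ℝ) (L : ℕ) : ℝ :=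
  ψ (∑ v, ginEmb G x φ ε L v)

/-! Both the computation tree and the WL color of a node are obtained by the same recursion over
its neighbours: the computation tree keeps the list of child trees, the WL color the multiset of
child colors. Matching children up to permutation is exactly equality of these multisets, so
induction on the number of rounds transports a tree isomorphism to equal colors. The fuel
`max depth` of `RTree.Equiv'` may be smaller than `k`; it can be raised because a tree of depth
at most `n` is already fully compared with fuel `n`. -/

namespace RTree

variable {p : ℕ}

theorem one_le_depth : ∀ t : RTree p, 1 ≤ t.depth
  | node _ _ => by rw [depth]; omega

theorem depth_le_depthList_of_mem {t : RTree p} : ∀ {ts : List (RTree p)}, t ∈ ts →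
    t.depth ≤ depthList ts
  | _ :: _, ht => by
    rw [depthList]
    rcases List.mem_cons.1 ht with rfl | ht
    · exact le_max_left _ _
    · exact (depth_le_depthList_of_mem ht).trans (le_max_right _ _)

theorem depthList_le {n : ℕ} : ∀ {ts : List (RTree p)}, (∀ t ∈ ts, t.depth ≤ n) →
    depthList ts ≤ n
  | [], _ => Nat.zero_le n
  | t :: ts, h => max_le (h t List.mem_cons_self)
      (depthList_le fun s hs => h s (List.mem_cons_of_mem t hs))

theorem equivAux_of_succ : ∀ {n : ℕ} {Ta Tb : RTree p}, equivAux (n + 1) Ta Tb →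
    equivAux n Ta Tb
  | 0, _, _, _ => trivial
  | _ + 1, node _ _, node _ _, ⟨hxy, ds', hperm, hcs⟩ =>
    ⟨hxy, ds', hperm, hcs.imp fun _ _ => equivAux_of_succ⟩

theorem equivAux_succ_of_depth_le : ∀ {n : ℕ} {Ta Tb : RTree p}, Ta.depth ≤ n →
    equivAux n Ta Tb → equivAux (n + 1) Ta Tb
  | 0, Ta, _, hd, _ => absurd (Ta.one_le_depth.trans hd) (by omega)
  | n + 1, node x cs, node _ _, hd, ⟨hxy, ds', hperm, hcs⟩ => by
    have hdepth : ∀ c ∈ cs, c.depth ≤ n := fun c hc =>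
      (depth_le_depthList_of_mem hc).trans (by rw [depth] at hd; omega)
    refine ⟨hxy, ds', hperm, ?_⟩
    exact (List.forall₂_and_left _ _ |>.2 ⟨hdepth, hcs⟩).imp
      fun _ _ h => equivAux_succ_of_depth_le h.1 h.2

theorem equivAux_of_depth_le {n m : ℕ} {Ta Tb : RTree p} (hd : Ta.depth ≤ n) (hnm : n ≤ m)
    (h : equivAux n Ta Tb) : equivAux m Ta Tb := by
  induction m, hnm using Nat.le_induction with
  | base => exact h
  | succ m hnm ih => exact equivAux_succ_of_depth_le (hd.trans hnm) ih

theorem rel_children_of_equivAux_succ {n : ℕ} {x y : EuclideanSpace ℝ (Fin p)}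
    {cs ds : List (RTree p)} (h : equivAux (n + 1) (node x cs) (node y ds)) :
    x = y ∧ Multiset.Rel (equivAux n) (cs : Multiset (RTree p)) ds := by
  obtain ⟨hxy, ds', hperm, hcs⟩ := h
  refine ⟨hxy, (Multiset.coe_eq_coe.2 hperm) ▸ ?_⟩
  clear hperm
  induction hcs with
  | nil => exact .zero
  | cons hcd _ ih => exact .cons hcd ih

end RTree

open RTree

theorem depth_compTree_le {V : Type*} [Fintype V] {p : ℕ} (G : SimpleGraph V)
    [DecidableRel G.Adj] (x : V → EuclideanSpace ℝ (Fin p)) :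
    ∀ (k : ℕ) (v : V), (compTree G x k v).depth ≤ k + 1
  | 0, v => by simp [compTree, depth, depthList]
  | k + 1, v => by
    rw [compTree, depth]
    have := depthList_le fun t (ht : t ∈ (G.neighborFinset v).val.toList.map (compTree G x k)) =>
      by obtain ⟨w, -, rfl⟩ := List.mem_map.1 ht; exact depth_compTree_le G x k w
    omega

section

variable {Va Vb : Type*} [Fintype Va] [Fintype Vb] {p : ℕ}
  (Ga : SimpleGraph Va) [DecidableRel Ga.Adj] (xa : Va → EuclideanSpace ℝ (Fin p))
  (Gb : SimpleGraph Vb) [DecidableRel Gb.Adj] (xb : Vb → EuclideanSpace ℝ (Fin p))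

theorem rel_compTree_neighbors_of_equivAux {n j : ℕ} {u : Va} {v : Vb}
    (h : equivAux (n + 1) (compTree Ga xa (j + 1) u) (compTree Gb xb (j + 1) v)) :
    xa u = xb v ∧ Multiset.Rel (fun a b => equivAux n (compTree Ga xa j a) (compTree Gb xb j b))
      (Ga.neighborFinset u).val (Gb.neighborFinset v).val := by
  rw [compTree, compTree] at h
  obtain ⟨hxy, hrel⟩ := rel_children_of_equivAux_succ h
  rw [← Multiset.map_coe, ← Multiset.map_coe, Multiset.coe_toList, Multiset.coe_toList,
    Multiset.rel_map] at hrel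
  exact ⟨hxy, hrel⟩

/-- Allowing trees deeper than the number `n` of rounds lets the induction apply the hypothesis
to the root color, which needs the same tree compared with one unit of fuel less. -/
theorem wl_eq_of_equivAux_compTree : ∀ {n j : ℕ}, n ≤ j → ∀ {u : Va} {v : Vb},
    equivAux (n + 1) (compTree Ga xa j u) (compTree Gb xb j v) → wl Ga xa n u = wl Gb xb n v
  | 0, 0, _, _, _, h => h.1
  | 0, _ + 1, _, _, _, h => h.1
  | n + 1, j + 1, hnj, u, v, h => by
    have hroot : wl Ga xa n u = wl Gb xb n v :=
      wl_eq_of_equivAux_compTree (by omega) (equivAux_of_succ h)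
    have hnbrs := ((rel_compTree_neighbors_of_equivAux Ga xa Gb xb h).2.mono
      fun a _ b _ hab => wl_eq_of_equivAux_compTree (by omega) hab)
    rw [← Multiset.rel_map, Multiset.rel_eq] at hnbrs
    rw [wl, wl]
    exact Prod.ext hroot hnbrs

end

/-- If the depth-`k` computation trees of `u` and `v` are equal (as labelled
rooted trees with multiset children), then their WL colors after `k - 1`
iterations of 1-WL color refinement agree. -/
theorem wl_eq_of_compTree_equiv {Va Vb : Type*} [Fintype Va] [Fintype Vb] {p : ℕ}
    (Ga : SimpleGraph Va) [DecidableRel Ga.Adj] (xa : Va → EuclideanSpace ℝ (Fin p))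
    (Gb : SimpleGraph Vb) [DecidableRel Gb.Adj] (xb : Vb → EuclideanSpace ℝ (Fin p))
    (k : ℕ) (hk : 1 ≤ k) (u : Va) (v : Vb)
    (h : RTree.Equiv' (compTree Ga xa (k - 1) u) (compTree Gb xb (k - 1) v)) :
    wl Ga xa (k - 1) u = wl Gb xb (k - 1) v := by
  have hfuel :
      max (compTree Ga xa (k - 1) u).depth (compTree Gb xb (k - 1) v).depth ≤ k - 1 + 1 :=
    max_le (depth_compTree_le Ga xa _ u) (depth_compTree_le Gb xb _ v)
  exact wl_eq_of_equivAux_compTree Ga xa Gb xb le_rfl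
    (equivAux_of_depth_le (le_max_left _ _) hfuel h)

end
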